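/- arXiv:2302.12181 — 5 statements merged into one kernel-verified Lean document; each statement's English description precedes it below -/
import Mathlib

section
/- Fix h ∈ ℝ and let E(r,w) := (1/2) e^{2w} − h r^2 + f(r) − 1, where f(r) = r^2 ln r for r > 0 and f(0)=0. Then along any solution of the regularized vector field ṙ = −(r^3/(r^2+2)) e^{2w} cos φ, φ̇ = (e^{2w} − r^2) sin φ, ψ̇ = r^2 sin φ, ẇ = r^2 (1 − e^{2w}/(r^2+2)) cos φ, one has d/dτ E(r(τ),w(τ)) = 0 on the set where (1/2)e^{2w} = h r^2 − f(r) + 1. -/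
noncomputable def fExt (r : ℝ) : ℝ := if 0 < r then r ^ 2 * Real.log r else 0

/-- Extended energy `E(r,w) = (1/2)e^{2w} − h r² + f(r) − 1`. -/
noncomputable def Eh (h r w : ℝ) : ℝ :=
  (1 / 2) * Real.exp (2 * w) - h * r ^ 2 + fExt r - 1

open Filter Topology in
lemma hasDerivAt_fExt {x : ℝ} (hx : 0 ≤ x) :
    HasDerivAt fExt (if 0 < x then 2 * x * Real.log x + x else 0) x := by
  rcases hx.lt_or_eq with hx | hx
  · rw [if_pos hx]
    have hev : (fun r => r ^ 2 * Real.log r) =ᶠ[𝓝 x] fExt := by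
      filter_upwards [eventually_gt_nhds hx] with y hy
      simp [fExt, hy]
    have h1 : HasDerivAt (fun r => r ^ 2 * Real.log r) (2 * x * Real.log x + x) x := by
      have := (hasDerivAt_pow 2 x).mul (Real.hasDerivAt_log hx.ne')
      refine this.congr_deriv ?_
      field_simp
      ring
    exact h1.congr_of_eventuallyEq hev.symm
  · rw [if_neg (by simp [← hx])]
    subst hx
    rw [hasDerivAt_iff_tendsto_slope]
    have hright : Tendsto (slope fExt 0) (𝓝[>] (0:ℝ)) (𝓝 0) := by
      have h2 : Tendsto (fun s : ℝ => Real.log s * s ^ (1:ℝ)) (𝓝[>] (0:ℝ)) (𝓝 0) :=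
        tendsto_log_mul_rpow_nhdsGT_zero one_pos
      refine h2.congr' ?_
      filter_upwards [self_mem_nhdsWithin] with s hs
      have hs' : (0:ℝ) < s := hs
      simp only [slope, fExt, if_pos hs', Real.rpow_one, vsub_eq_sub, lt_self_iff_false, if_false, sub_zero, smul_eq_mul]
      field_simp
    have hleft : Tendsto (slope fExt 0) (𝓝[<] (0:ℝ)) (𝓝 0) := by
      have : slope fExt 0 =ᶠ[𝓝[<] (0:ℝ)] fun _ => 0 := by
        filter_upwards [self_mem_nhdsWithin] with s hs
        have hs' : ¬ (0:ℝ) < s := not_lt.2 (le_of_lt hs)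
        simp [slope, fExt, hs']
      exact tendsto_const_nhds.congr' this.symm
    have hsup : 𝓝[<] (0:ℝ) ⊔ 𝓝[>] (0:ℝ) = 𝓝[≠] (0:ℝ) := nhdsLT_sup_nhdsGT 0
    rw [← hsup, tendsto_sup]
    exact ⟨hleft, hright⟩

/-- The extended energy is a first integral of the regularized logarithm vector
field: along any solution, `d/dτ E(r(τ),w(τ)) = 0` at every time where the
energy relation `(1/2)e^{2w} = h r² − f(r) + 1` holds. -/
theorem energy_first_integral (h : ℝ) (r φ ψ w : ℝ → ℝ)
    (hr : ∀ τ, HasDerivAt r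
      (-((r τ) ^ 3 / ((r τ) ^ 2 + 2)) * Real.exp (2 * w τ) * Real.cos (φ τ)) τ)
    (hφ : ∀ τ, HasDerivAt φ ((Real.exp (2 * w τ) - (r τ) ^ 2) * Real.sin (φ τ)) τ)
    (hψ : ∀ τ, HasDerivAt ψ ((r τ) ^ 2 * Real.sin (φ τ)) τ)
    (hw : ∀ τ, HasDerivAt w
      ((r τ) ^ 2 * (1 - Real.exp (2 * w τ) / ((r τ) ^ 2 + 2)) * Real.cos (φ τ)) τ)
    (hnn : ∀ τ, 0 ≤ r τ) :
    ∀ τ, (1 / 2) * Real.exp (2 * w τ) = h * (r τ) ^ 2 - fExt (r τ) + 1 →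
      HasDerivAt (fun s => Eh h (r s) (w s)) 0 τ := by
  intro τ hE
  set R := r τ with hR
  set E := Real.exp (2 * w τ) with hEdef
  set C := Real.cos (φ τ) with hC
  set r' := -(R ^ 3 / (R ^ 2 + 2)) * E * C with hr'
  set w' := R ^ 2 * (1 - E / (R ^ 2 + 2)) * C with hw'
  have hfd : HasDerivAt (fun s => fExt (r s))
      ((if 0 < R then 2 * R * Real.log R + R else 0) * r') τ :=
    (hasDerivAt_fExt (hnn τ)).comp τ (hr τ)
  have hA : HasDerivAt (fun s => (1 / 2 : ℝ) * Real.exp (2 * w s))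
      ((1 / 2) * (Real.exp (2 * w τ) * (2 * w'))) τ :=
    (((hw τ).const_mul 2).exp).const_mul (1 / 2)
  have hB : HasDerivAt (fun s => h * (r s) ^ 2) (h * (2 * R ^ 1 * r')) τ :=
    ((hr τ).pow 2).const_mul h
  have htot : HasDerivAt (fun s => Eh h (r s) (w s))
      ((1 / 2) * (Real.exp (2 * w τ) * (2 * w')) - h * (2 * R ^ 1 * r')
        + (if 0 < R then 2 * R * Real.log R + R else 0) * r') τ := by
    simpa [Eh] using ((hA.sub hB).add hfd).sub_const 1
  have hden : (R ^ 2 + 2 : ℝ) ≠ 0 := by positivity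
  have hzero : (1 / 2) * (Real.exp (2 * w τ) * (2 * w')) - h * (2 * R ^ 1 * r')
        + (if 0 < R then 2 * R * Real.log R + R else 0) * r' = 0 := by
    rcases (hnn τ).lt_or_eq with hRpos | hR0
    · rw [if_pos hRpos]
      have hE' : E = 2 * h * R ^ 2 - 2 * R ^ 2 * Real.log R + 2 := by
        have : fExt R = R ^ 2 * Real.log R := by simp [fExt, show 0 < R from hRpos]
        rw [this] at hE
        linarith
      rw [hr', hw', ← hEdef, hE']
      field_simp
      ring
    · have hR0' : R = 0 := hR0.symm
      rw [if_neg (by simp [hR0']), hr', hw', hR0']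
      ring
  rw [← hzero]
  exact htot
end

section
/- The extended angular momentum C(r,φ,w) := e^w g(r) sin φ, where g(r) = exp(−1/r^2) for r > 0 and g(0) = 0, is a first integral of the regularized logarithm problem: along any solution of the regularized equations, d/dτ (e^{w(τ)} g(r(τ)) sin φ(τ)) = 0 for r(τ) > 0. -/
/-!
Away from `r = 0`, `C = e^w g(r) sin φ` with `(log g)' = 2 / r³`, so
`C' = C · (w' + 2 r' / r³ + cot φ · φ')`. Along the flow
`w' + 2 r' / r³ = (r² - e^{2w}) cos φ`, which is exactly `-cot φ · φ'`.
-/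

noncomputable def gExt (r : ℝ) : ℝ := if 0 < r then Real.exp (-1 / r ^ 2) else 0

open Filter Topology

lemma gExt_eventuallyEq_exp {x : ℝ} (hx : 0 < x) :
    gExt =ᶠ[𝓝 x] fun r => Real.exp (-1 / r ^ 2) := by
  filter_upwards [eventually_gt_nhds hx] with r hr
  simp [gExt, hr]

lemma hasDerivAt_exp_neg_inv_sq {x : ℝ} (hx : x ≠ 0) :
    HasDerivAt (fun r => Real.exp (-1 / r ^ 2)) (Real.exp (-1 / x ^ 2) * (2 / x ^ 3)) x := by
  refine (((hasDerivAt_const x (-1 : ℝ)).div (hasDerivAt_pow 2 x)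
    (pow_ne_zero 2 hx)).exp).congr_deriv ?_
  simp only [Pi.div_apply]
  field_simp
  ring

lemma hasDerivAt_gExt {x : ℝ} (hx : 0 < x) : HasDerivAt gExt (2 / x ^ 3 * gExt x) x := by
  rw [(gExt_eventuallyEq_exp hx).eq_of_nhds, mul_comm]
  exact (hasDerivAt_exp_neg_inv_sq hx.ne').congr_of_eventuallyEq (gExt_eventuallyEq_exp hx)

theorem angular_momentum_first_integral_general (r φ w : ℝ → ℝ)
    (hr : ∀ τ, HasDerivAt r
      (-((r τ) ^ 3 / ((r τ) ^ 2 + 2)) * Real.exp (2 * w τ) * Real.cos (φ τ)) τ)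
    (hφ : ∀ τ, HasDerivAt φ ((Real.exp (2 * w τ) - (r τ) ^ 2) * Real.sin (φ τ)) τ)
    (hw : ∀ τ, HasDerivAt w
      ((r τ) ^ 2 * (1 - Real.exp (2 * w τ) / ((r τ) ^ 2 + 2)) * Real.cos (φ τ)) τ) :
    ∀ τ, 0 < r τ →
      HasDerivAt (fun s => Real.exp (w s) * gExt (r s) * Real.sin (φ s)) 0 τ := by
  intro τ hτ
  have hg := (hasDerivAt_gExt hτ).comp τ (hr τ)
  refine (((hw τ).exp.mul hg).mul (hφ τ).sin).congr_deriv ?_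
  simp only [Pi.mul_apply, Function.comp_apply]
  field_simp
  ring

/-- The extended angular momentum `C(r,φ,w) = e^w g(r) sin φ` is a first
integral of the regularized logarithm problem: along any solution,
`d/dτ (e^{w(τ)} g(r(τ)) sin φ(τ)) = 0` wherever `r(τ) > 0`. -/
theorem angular_momentum_first_integral (r φ ψ w : ℝ → ℝ)
    (hr : ∀ τ, HasDerivAt r
      (-((r τ) ^ 3 / ((r τ) ^ 2 + 2)) * Real.exp (2 * w τ) * Real.cos (φ τ)) τ)
    (hφ : ∀ τ, HasDerivAt φ ((Real.exp (2 * w τ) - (r τ) ^ 2) * Real.sin (φ τ)) τ)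
    (hψ : ∀ τ, HasDerivAt ψ ((r τ) ^ 2 * Real.sin (φ τ)) τ)
    (hw : ∀ τ, HasDerivAt w
      ((r τ) ^ 2 * (1 - Real.exp (2 * w τ) / ((r τ) ^ 2 + 2)) * Real.cos (φ τ)) τ) :
    ∀ τ, 0 < r τ →
      HasDerivAt (fun s => Real.exp (w s) * gExt (r s) * Real.sin (φ s)) 0 τ :=
  angular_momentum_first_integral_general r φ w hr hφ hw
end

section
/- Fix h ∈ ℝ. There exists δ > 0 such that for every solution (r(τ), φ(τ), ψ(τ), w(τ)) of the regularized logarithm equations on the energy level (1/2)e^{2w} = h r^2 − f(r) + 1: if at some time τ_0 we have 0 < r(τ_0) < δ and ṙ(τ_0) = 0, then r̈(τ_0) > 0. Specifically, ṙ = 0 with r > 0 forces cos φ = 0, and then r̈ = (r^3/(r^2+2))(e^{2w} − r^2) > 0 for r small. -/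
open Real

lemma hasDerivAt_mul_cos_of_cos_eq_zero {F φ : ℝ → ℝ} {φ' τ : ℝ}
    (hF : DifferentiableAt ℝ F τ) (hφ : HasDerivAt φ φ' τ) (hcos : cos (φ τ) = 0) :
    HasDerivAt (fun t => F t * cos (φ t)) (-(F τ * sin (φ τ) * φ')) τ :=
  (hF.hasDerivAt.mul hφ.cos).congr_deriv (by rw [hcos]; ring)

/-- For `r < 1` the term `-f(r) = -r² log r` is nonnegative, and `r < (|h| + 1)⁻¹` keeps
`(2h - 1) r² + 2` positive. -/
lemma sq_lt_of_energy {h R E : ℝ} (hR : 0 < R) (hRδ : R < (|h| + 1)⁻¹)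
    (hE : 1 / 2 * E = h * R ^ 2 - fExt R + 1) : R ^ 2 < E := by
  have hscale : R * (|h| + 1) < 1 := by
    rwa [← mul_one (|h| + 1)⁻¹, lt_inv_mul_iff₀' (by positivity)] at hRδ
  have hR1 : R < 1 := by nlinarith [abs_nonneg h]
  have hlog : log R ≤ 0 := log_nonpos hR.le hR1.le
  have hfExt : fExt R = R ^ 2 * log R := if_pos hR
  rw [hfExt] at hE
  nlinarith [neg_abs_le h, mul_nonneg (sq_nonneg R) (neg_nonneg.mpr hlog), mul_pos hR hR]

/-- Wilson–Yorke hypothesis for `I = r`: for each `h` there is `δ > 0` such that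
along any solution of the regularized logarithm equations on the energy level
`(1/2)e^{2w} = h r² − f(r) + 1`, if `0 < r(τ₀) < δ` and `ṙ(τ₀) = 0` then
`cos φ(τ₀) = 0` and `r̈(τ₀) > 0`. -/
theorem wilson_yorke_hypothesis (h : ℝ) :
    ∃ δ : ℝ, 0 < δ ∧
    ∀ r φ ψ w : ℝ → ℝ,
      (∀ τ, HasDerivAt r
        (-((r τ) ^ 3 / ((r τ) ^ 2 + 2)) * Real.exp (2 * w τ) * Real.cos (φ τ)) τ) →
      (∀ τ, HasDerivAt φ ((Real.exp (2 * w τ) - (r τ) ^ 2) * Real.sin (φ τ)) τ) →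
      (∀ τ, HasDerivAt ψ ((r τ) ^ 2 * Real.sin (φ τ)) τ) →
      (∀ τ, HasDerivAt w
        ((r τ) ^ 2 * (1 - Real.exp (2 * w τ) / ((r τ) ^ 2 + 2)) * Real.cos (φ τ)) τ) →
      (∀ τ, (1 / 2) * Real.exp (2 * w τ) = h * (r τ) ^ 2 - fExt (r τ) + 1) →
      ∀ τ₀ : ℝ, 0 < r τ₀ → r τ₀ < δ → deriv r τ₀ = 0 →
        Real.cos (φ τ₀) = 0 ∧ 0 < deriv (deriv r) τ₀ := by
  refine ⟨(|h| + 1)⁻¹, by positivity, ?_⟩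
  intro r φ ψ w hr hφ _ hw henergy τ₀ hpos hδ hr₀
  set F : ℝ → ℝ := fun t => -(r t ^ 3 / (r t ^ 2 + 2)) * exp (2 * w t) with hFdef
  have hdr : deriv r = fun t => F t * cos (φ t) := funext fun t => (hr t).deriv
  have hF₀ : F τ₀ < 0 := by
    have : 0 < r τ₀ ^ 3 / (r τ₀ ^ 2 + 2) * exp (2 * w τ₀) := by positivity
    simp only [hFdef, neg_mul]
    linarith
  have hcos : cos (φ τ₀) = 0 := by
    rw [hdr] at hr₀
    exact (mul_eq_zero.mp hr₀).resolve_left hF₀.ne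
  have hF : DifferentiableAt ℝ F τ₀ := by
    have := fun t => (hr t).differentiableAt
    have := fun t => (hw t).differentiableAt
    fun_prop (disch := positivity)
  have hsin : sin (φ τ₀) ^ 2 = 1 := by nlinarith [sin_sq_add_cos_sq (φ τ₀)]
  have hgap := sq_lt_of_energy hpos hδ (henergy τ₀)
  refine ⟨hcos, ?_⟩
  rw [hdr, (hasDerivAt_mul_cos_of_cos_eq_zero hF (hφ τ₀) hcos).deriv]
  calc (0 : ℝ) < -F τ₀ * (exp (2 * w τ₀) - r τ₀ ^ 2) := mul_pos (neg_pos.mpr hF₀) (by linarith)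
    _ = _ := by rw [← mul_one (-F τ₀ * _), ← hsin]; ring
end

section
/- Let (r(t), p_r(t)) be a maximal solution of the reduced logarithm equations dr/dt = p_r, dp_r/dt = c^2/r^3 − 1/r with finite forward maximal time t* < ∞. Then lim_{t → t*} r(t) = 0 (the singularity is a collision). -/
open Filter Set Topology

/-!
Along a solution the energy `h = p²/2 + c²/(2r²) + log r` is conserved, and
`log (eʰ/r) ≤ eʰ/r - 1` turns `p² ≤ 2 (h - log r)` into `|r p| ≤ eʰ`. Hence `r²`, whose derivative
is `2 r p`, converges as `t → t*`. If its limit is positive, `r` stays away from `0`, so `p'` is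
bounded and `p` converges too; the Picard–Lindelöf solution through the limit point then extends
the solution past `t*`, contradicting maximality.
-/

section ODE

variable {E : Type*} [NormedAddCommGroup E] [NormedSpace ℝ E]

theorem exists_tendsto_nhdsLT_of_norm_deriv_le [CompleteSpace E] {f f' : ℝ → E} {a b C : ℝ}
    (hab : a < b) (hf : ∀ t ∈ Ioo a b, HasDerivAt f (f' t) t) (hC : ∀ t ∈ Ioo a b, ‖f' t‖ ≤ C) :
    ∃ l, Tendsto f (𝓝[<] b) (𝓝 l) := by
  have hlip : LipschitzOnWith (Real.toNNReal C) f (Ioo a b) :=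
    (convex_Ioo a b).lipschitzOnWith_of_nnnorm_hasDerivWithin_le
      (fun t ht => (hf t ht).hasDerivWithinAt)
      (fun t ht => NNReal.coe_le_coe.1 ((hC t ht).trans C.le_coe_toNNReal))
  rw [← nhdsWithin_Ioo_eq_nhdsLT hab]
  have : (𝓝[Ioo a b] b).NeBot := by rw [nhdsWithin_Ioo_eq_nhdsLT hab]; infer_instance
  exact cauchy_map_iff_exists_tendsto.mp
    ((cauchy_nhds.mono' this inf_le_left).map_of_le hlip.uniformContinuousOn inf_le_right)

theorem hasDerivAt_of_tendsto_deriv_nhdsLT {y y' : ℝ → E} {a T : ℝ} {e : E} (haT : a < T)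
    (hy : ∀ t ∈ Ioo a T, HasDerivAt y (y' t) t) (hcont : Tendsto y (𝓝[<] T) (𝓝 (y T)))
    (hy' : Tendsto y' (𝓝[<] T) (𝓝 e)) (hright : HasDerivWithinAt y e (Ici T) T) :
    HasDerivAt y e T := by
  have hleft : HasDerivWithinAt y e (Iic T) T := by
    refine hasDerivWithinAt_Iic_of_tendsto_deriv (s := Ioo a T)
      (fun t ht => (hy t ht).differentiableAt.differentiableWithinAt) ?_ (Ioo_mem_nhdsLT haT) ?_
    · rwa [ContinuousWithinAt, nhdsWithin_Ioo_eq_nhdsLT haT]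
    · refine hy'.congr' ?_
      filter_upwards [Ioo_mem_nhdsLT haT] with t ht using (hy t ht).deriv.symm
  simpa [Iic_union_Ici] using hleft.union hright

theorem exists_hasDerivAt_mapsTo_of_contDiffAt [CompleteSpace E] {v : E → E} {x₀ : E} {s : Set E}
    (hv : ContDiffAt ℝ 1 v x₀) (hs : s ∈ 𝓝 x₀) (T : ℝ) :
    ∃ α : ℝ → E, α T = x₀ ∧ ∃ ε > 0,
      ∀ t ∈ Ioo (T - ε) (T + ε), HasDerivAt α (v (α t)) t ∧ α t ∈ s := by
  obtain ⟨α, hαT, ε₀, hε₀, hα⟩ :=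
    hv.exists_forall_mem_closedBall_exists_eq_forall_mem_Ioo_hasDerivAt₀ T
  have hαs : ∀ᶠ t in 𝓝 T, α t ∈ s :=
    (hα T ⟨by linarith, by linarith⟩).continuousAt.preimage_mem_nhds (hαT ▸ hs)
  obtain ⟨ε₁, hε₁, hball⟩ := Metric.eventually_nhds_iff.mp hαs
  refine ⟨α, hαT, min ε₀ ε₁, lt_min hε₀ hε₁, fun t ⟨h₁, h₂⟩ => ?_⟩
  have := min_le_left ε₀ ε₁
  have := min_le_right ε₀ ε₁
  refine ⟨hα t ⟨by linarith, by linarith⟩, hball ?_⟩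
  rw [Real.dist_eq, abs_lt]
  constructor <;> linarith

theorem exists_hasDerivAt_extension_of_tendsto [CompleteSpace E] {v : E → E} {x : ℝ → E}
    {a T : ℝ} {x₀ : E} {s : Set E} (hv : ContDiffAt ℝ 1 v x₀) (hs : s ∈ 𝓝 x₀) (haT : a < T)
    (hx : ∀ t ∈ Ico a T, HasDerivAt x (v (x t)) t) (hlim : Tendsto x (𝓝[<] T) (𝓝 x₀)) :
    ∃ ε > 0, ∃ y : ℝ → E, EqOn y x (Iio T) ∧ MapsTo y (Ico T (T + ε)) s ∧
      ∀ t ∈ Ico a (T + ε), HasDerivAt y (v (y t)) t := by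
  obtain ⟨α, hαT, ε, hε, hα⟩ := exists_hasDerivAt_mapsTo_of_contDiffAt hv hs T
  set y : ℝ → E := fun t => if t < T then x t else α t
  have hyx : EqOn y x (Iio T) := fun t ht => if_pos ht
  have hyα : EqOn y α (Ici T) := fun t ht => if_neg (not_lt.mpr ht)
  have hyT : y T = x₀ := (hyα (mem_Ici.2 le_rfl)).trans hαT
  refine ⟨ε, hε, y, hyx, fun t ht => hyα ht.1 ▸ (hα t ⟨by linarith [ht.1], ht.2⟩).2,
    fun t ht => ?_⟩
  have hy_lt : ∀ t ∈ Ico a T, HasDerivAt y (v (x t)) t := fun t ht =>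
    (hx t ht).congr_of_eventuallyEq (eventuallyEq_of_mem (Iio_mem_nhds ht.2) hyx)
  rcases lt_trichotomy t T with htT | rfl | hTt
  · exact hyx htT ▸ hy_lt t ⟨ht.1, htT⟩
  · have hright := ((hα t ⟨by linarith, by linarith⟩).1.hasDerivWithinAt (s := Ici t)).congr
      hyα (hyα (mem_Ici.2 le_rfl))
    rw [hαT] at hright
    rw [hyT]
    refine hasDerivAt_of_tendsto_deriv_nhdsLT haT (fun t ht => hy_lt t (Ioo_subset_Ico_self ht))
      ?_ (hv.continuousAt.tendsto.comp hlim) hright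
    rw [hyT]
    exact hlim.congr' (eventuallyEq_of_mem self_mem_nhdsWithin hyx).symm
  · rw [hyα hTt.le]
    exact (hα t ⟨by linarith, ht.2⟩).1.congr_of_eventuallyEq
      (eventuallyEq_of_mem (Ioi_mem_nhds hTt) fun u hu => hyα (mem_Ici.2 hu.le))

end ODE

noncomputable section Logarithm

def IsLogSolution (c : ℝ) (r p : ℝ → ℝ) (s : Set ℝ) : Prop :=
  ∀ t ∈ s, 0 < r t ∧ HasDerivAt r (p t) t ∧ HasDerivAt p (c ^ 2 / r t ^ 3 - 1 / r t) t

def logEnergy (c r p : ℝ) : ℝ := p ^ 2 / 2 + c ^ 2 / (2 * r ^ 2) + Real.log r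

def logField (c : ℝ) (x : ℝ × ℝ) : ℝ × ℝ := (x.2, c ^ 2 / x.1 ^ 3 - 1 / x.1)

theorem contDiffAt_logField (c : ℝ) {n : WithTop ℕ∞} {x : ℝ × ℝ} (hx : x.1 ≠ 0) :
    ContDiffAt ℝ n (logField c) x := by
  unfold logField
  fun_prop (disch := simp [hx])

theorem abs_mul_le_exp_of_logEnergy_le {c r p h : ℝ} (hr : 0 < r) (hE : logEnergy c r p ≤ h) :
    |r * p| ≤ Real.exp h := by
  have hkin : p ^ 2 ≤ 2 * (h - Real.log r) := by
    have : 0 ≤ c ^ 2 / (2 * r ^ 2) := by positivity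
    unfold logEnergy at hE
    linarith
  have hlog : h - Real.log r ≤ Real.exp h / r - 1 := by
    have := Real.log_le_sub_one_of_pos (div_pos (Real.exp_pos h) hr)
    rwa [Real.log_div (Real.exp_pos h).ne' hr.ne', Real.log_exp] at this
  refine abs_le_of_sq_le_sq ?_ (Real.exp_pos h).le
  calc (r * p) ^ 2 = r ^ 2 * p ^ 2 := by ring
    _ ≤ r ^ 2 * (2 * (Real.exp h / r - 1)) := by gcongr; linarith
    _ = 2 * (r * Real.exp h - r ^ 2) := by field_simp
    _ ≤ Real.exp h ^ 2 := by nlinarith [sq_nonneg (r - Real.exp h / 2), sq_nonneg (Real.exp h)]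

namespace IsLogSolution

variable {c : ℝ} {r p : ℝ → ℝ}

theorem mono {s s' : Set ℝ} (h : IsLogSolution c r p s) (hs : s' ⊆ s) : IsLogSolution c r p s' :=
  fun t ht => h t (hs ht)

theorem hasDerivAt_logEnergy {s : Set ℝ} (h : IsLogSolution c r p s) {t : ℝ} (ht : t ∈ s) :
    HasDerivAt (fun t => logEnergy c (r t) (p t)) 0 t := by
  obtain ⟨hr0, hr, hp⟩ := h t ht
  have := (((hp.pow 2).div_const 2).add ((hasDerivAt_const t (c ^ 2)).div
    ((hr.pow 2).const_mul 2) (by simp [hr0.ne']))).add (hr.log hr0.ne')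
  refine this.congr_deriv ?_
  simp only [Pi.pow_apply]
  field_simp
  ring

theorem logEnergy_eq {a b : ℝ} (h : IsLogSolution c r p (Ico a b)) {t : ℝ} (ht : t ∈ Ico a b) :
    logEnergy c (r t) (p t) = logEnergy c (r a) (p a) := by
  have := (convex_Ico a b).norm_image_sub_le_of_norm_hasDerivWithin_le
    (fun t ht => (h.hasDerivAt_logEnergy ht).hasDerivWithinAt) (fun _ _ => norm_zero.le)
    (left_mem_Ico.2 (ht.1.trans_lt ht.2)) ht
  simpa [sub_eq_zero] using this

theorem exists_tendsto_sq {a b : ℝ} (h : IsLogSolution c r p (Ico a b)) (hab : a < b) :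
    ∃ L, Tendsto (fun t => r t ^ 2) (𝓝[<] b) (𝓝 L) := by
  refine exists_tendsto_nhdsLT_of_norm_deriv_le (C := 2 * Real.exp (logEnergy c (r a) (p a))) hab
    (fun t ht => ((h t (Ioo_subset_Ico_self ht)).2.1.pow 2)) fun t ht => ?_
  have ht' := Ioo_subset_Ico_self ht
  have := abs_mul_le_exp_of_logEnergy_le (h t ht').1 (h.logEnergy_eq ht').le
  calc ‖(2 : ℕ) * r t ^ (2 - 1) * p t‖ = 2 * |r t * p t| := by
        simp [abs_mul, mul_assoc]
    _ ≤ _ := by linarith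

theorem hasDerivAt_logField {s : Set ℝ} (h : IsLogSolution c r p s) {t : ℝ} (ht : t ∈ s) :
    HasDerivAt (fun t => (r t, p t)) (logField c (r t, p t)) t :=
  (h t ht).2.1.prodMk (h t ht).2.2

theorem exists_tendsto_momentum_of_le {a b δ : ℝ} (h : IsLogSolution c r p (Ico a b))
    (hab : a < b) (hδ : 0 < δ) (hr : ∀ t ∈ Ioo a b, δ ≤ r t) : ∃ π, Tendsto p (𝓝[<] b) (𝓝 π) := by
  refine exists_tendsto_nhdsLT_of_norm_deriv_le (C := c ^ 2 / δ ^ 3 + 1 / δ) hab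
    (fun t ht => (h t (Ioo_subset_Ico_self ht)).2.2) fun t ht => ?_
  have hrt := hr t ht
  have hr0 : 0 < r t := hδ.trans_le hrt
  have : 0 ≤ c ^ 2 / r t ^ 3 := by positivity
  have : 0 ≤ 1 / r t := by positivity
  have : c ^ 2 / r t ^ 3 ≤ c ^ 2 / δ ^ 3 := by gcongr
  have : 1 / r t ≤ 1 / δ := by gcongr
  rw [Real.norm_eq_abs, abs_le]
  constructor <;> linarith

theorem exists_extension {a b ρ : ℝ} (h : IsLogSolution c r p (Ico a b)) (hab : a < b)
    (hρ : 0 < ρ) (hr : Tendsto r (𝓝[<] b) (𝓝 ρ)) :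
    ∃ (r' p' : ℝ → ℝ) (ε : ℝ), 0 < ε ∧ (∀ t ∈ Ico a b, r' t = r t ∧ p' t = p t) ∧
      IsLogSolution c r' p' (Ico a (b + ε)) := by
  obtain ⟨l, hlb, hl⟩ :=
    mem_nhdsLT_iff_exists_Ioo_subset.1 (hr.eventually (lt_mem_nhds (half_lt_self hρ)))
  obtain ⟨π, hπ⟩ := (h.mono (Ico_subset_Ico_left (le_max_left a l))).exists_tendsto_momentum_of_le
    (max_lt hab hlb) (half_pos hρ)
    (fun t ht => (hl ⟨(le_max_right a l).trans_lt ht.1, ht.2⟩ : ρ / 2 < r t).le)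
  obtain ⟨ε, hε, y, hyx, hys, hy⟩ := exists_hasDerivAt_extension_of_tendsto
    (contDiffAt_logField c (x := (ρ, π)) hρ.ne')
    ((isOpen_lt continuous_const continuous_fst).mem_nhds hρ) hab
    (fun t ht => h.hasDerivAt_logField ht) (hr.prodMk_nhds hπ)
  refine ⟨fun t => (y t).1, fun t => (y t).2, ε, hε,
    fun t ht => by simp [hyx ht.2], fun t ht => ⟨?_, ?_, ?_⟩⟩
  · rcases lt_or_ge t b with htb | hbt
    · simpa [hyx htb] using (h t ⟨ht.1, htb⟩).1
    · exact hys ⟨hbt, ht.2⟩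
  · exact hasFDerivAt_fst.comp_hasDerivAt t (hy t ht)
  · exact hasFDerivAt_snd.comp_hasDerivAt t (hy t ht)

end IsLogSolution

end Logarithm

/-- If a maximal solution of the reduced logarithm equations
`dr/dt = p_r`, `dp_r/dt = c²/r³ − 1/r` has finite forward maximal time `t*`,
then `r(t) → 0` as `t → t*⁻`: the singularity is a collision. -/
theorem singularity_is_collision (c : ℝ) (r p : ℝ → ℝ) (tstar : ℝ)
    (htpos : 0 < tstar)
    (hsol : ∀ t ∈ Ico (0:ℝ) tstar, 0 < r t ∧
      HasDerivAt r (p t) t ∧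
      HasDerivAt p (c ^ 2 / (r t) ^ 3 - 1 / r t) t)
    -- maximality: the solution cannot be extended beyond `t*`
    (hmax : ¬ ∃ (r' p' : ℝ → ℝ) (ε : ℝ), 0 < ε ∧
      (∀ t ∈ Ico (0:ℝ) tstar, r' t = r t ∧ p' t = p t) ∧
      (∀ t ∈ Ico (0:ℝ) (tstar + ε), 0 < r' t ∧
        HasDerivAt r' (p' t) t ∧
        HasDerivAt p' (c ^ 2 / (r' t) ^ 3 - 1 / r' t) t)) :
    Tendsto r (nhdsWithin tstar (Iio tstar)) (nhds 0) := by
  have h : IsLogSolution c r p (Ico 0 tstar) := hsol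
  obtain ⟨L, hL⟩ := h.exists_tendsto_sq htpos
  have hr : Tendsto r (𝓝[<] tstar) (𝓝 √L) := by
    refine hL.sqrt.congr' ?_
    filter_upwards [Ioo_mem_nhdsLT htpos] with t ht
    exact Real.sqrt_sq (h t (Ioo_subset_Ico_self ht)).1.le
  rcases (Real.sqrt_nonneg L).eq_or_lt with hL0 | hLpos
  · rwa [← hL0] at hr
  · exact absurd (h.exists_extension htpos hLpos hr) hmax
end

section
/- Let (r(τ), φ(τ), ψ(τ), w(τ)) be a solution of the regularized logarithm equations on a fixed energy level such that r(τ) → 0 as τ → +∞ and with extended angular momentum c = e^{w} g(r) sin φ. Then c = 0. -/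
open Filter

/-- If a solution of the regularized logarithm equations on energy level `h`
satisfies `r(τ) → 0` as `τ → +∞`, then its (conserved) extended angular
momentum `c = e^w g(r) sin φ` vanishes. -/
theorem ang_mom_zero_of_collision (h c : ℝ) (r φ ψ w : ℝ → ℝ)
    (hr : ∀ τ, HasDerivAt r
      (-((r τ) ^ 3 / ((r τ) ^ 2 + 2)) * Real.exp (2 * w τ) * Real.cos (φ τ)) τ)
    (hφ : ∀ τ, HasDerivAt φ ((Real.exp (2 * w τ) - (r τ) ^ 2) * Real.sin (φ τ)) τ)
    (hψ : ∀ τ, HasDerivAt ψ ((r τ) ^ 2 * Real.sin (φ τ)) τ)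
    (hw : ∀ τ, HasDerivAt w
      ((r τ) ^ 2 * (1 - Real.exp (2 * w τ) / ((r τ) ^ 2 + 2)) * Real.cos (φ τ)) τ)
    (hnn : ∀ τ, 0 ≤ r τ)
    (henergy : ∀ τ, (1 / 2) * Real.exp (2 * w τ) = h * (r τ) ^ 2 - fExt (r τ) + 1)
    (hang : ∀ τ, Real.exp (w τ) * gExt (r τ) * Real.sin (φ τ) = c)
    (hlim : Tendsto r atTop (nhds 0)) :
    c = 0 := by
  have hbound : ∀ᶠ τ in atTop,
      ‖Real.exp (w τ) * gExt (r τ) * Real.sin (φ τ)‖ ≤ (2 * |h| + 5) * (r τ) ^ 2 := by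
    filter_upwards [hlim.eventually (eventually_le_nhds (by norm_num : (0:ℝ) < 1/2))]
      with τ hτ
    set x := r τ with hx
    have hx0 : 0 ≤ x := hnn τ
    have hx1 : x ≤ 1 := le_trans hτ (by norm_num)
    -- bounds on fExt x
    have hf_le : fExt x ≤ 0 := by
      unfold fExt
      split_ifs with hpos
      · have : Real.log x ≤ 0 := Real.log_nonpos hx0 hx1
        exact mul_nonpos_of_nonneg_of_nonpos (by positivity) this
      · exact le_refl 0
    have hf_ge : -1 ≤ fExt x := by
      unfold fExt
      split_ifs with hpos
      · have hlog : -1 / x ≤ Real.log x := by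
          have := Real.log_le_sub_one_of_pos (show (0:ℝ) < 1/x by positivity)
          have hlx : Real.log (1/x) = -Real.log x := by
            rw [one_div, Real.log_inv]
          have hneg : (-1:ℝ) / x = -(1 / x) := by ring
          linarith
        have : x ^ 2 * (-1 / x) ≤ x ^ 2 * Real.log x :=
          mul_le_mul_of_nonneg_left hlog (by positivity)
        have hxx : x ^ 2 * (-1 / x) = -x := by field_simp
        nlinarith
      · norm_num
    -- bound on e^{2w}
    have he2 : Real.exp (2 * w τ) ≤ 2 * |h| + 4 := by
      have he := henergy τ
      have hx2 : x ^ 2 ≤ 1 := by nlinarith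
      have hh : h * x ^ 2 ≤ |h| := by
        calc h * x ^ 2 ≤ |h| * x ^ 2 :=
              mul_le_mul_of_nonneg_right (le_abs_self h) (sq_nonneg x)
          _ ≤ |h| * 1 := mul_le_mul_of_nonneg_left hx2 (abs_nonneg h)
          _ = |h| := mul_one _
      nlinarith
    -- bound on e^w
    have hew : Real.exp (w τ) ≤ 2 * |h| + 5 := by
      have h2 : Real.exp (2 * w τ) = (Real.exp (w τ)) ^ 2 := by
        rw [← Real.exp_nat_mul]; ring_nf
      nlinarith [Real.exp_pos (w τ), sq_nonneg (Real.exp (w τ) - 1)]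
    -- bound on gExt
    have hg0 : 0 ≤ gExt x := by
      unfold gExt; split_ifs
      · exact (Real.exp_pos _).le
      · exact le_refl 0
    have hg_le : gExt x ≤ x ^ 2 := by
      unfold gExt
      split_ifs with hpos
      · have ht : (0:ℝ) < 1 / x ^ 2 := by positivity
        have : 1 / x ^ 2 ≤ Real.exp (1 / x ^ 2) := by
          nlinarith [Real.add_one_le_exp (1 / x ^ 2)]
        have hinv : Real.exp (-1 / x ^ 2) = (Real.exp (1 / x ^ 2))⁻¹ := by
          rw [← Real.exp_neg]; ring_nf
        rw [hinv, inv_le_iff_one_le_mul₀ (Real.exp_pos _)]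
        have h1 : x ^ 2 * (1 / x ^ 2) ≤ x ^ 2 * Real.exp (1 / x ^ 2) :=
          mul_le_mul_of_nonneg_left this (by positivity)
        have h2 : x ^ 2 * (1 / x ^ 2) = 1 := by field_simp
        nlinarith [h1, h2]
      · positivity
    have hsin : |Real.sin (φ τ)| ≤ 1 := Real.abs_sin_le_one _
    rw [Real.norm_eq_abs, abs_mul, abs_mul, abs_of_pos (Real.exp_pos _),
      abs_of_nonneg hg0]
    calc Real.exp (w τ) * gExt x * |Real.sin (φ τ)|
        ≤ Real.exp (w τ) * gExt x * 1 := by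
          apply mul_le_mul_of_nonneg_left hsin
          positivity
      _ = Real.exp (w τ) * gExt x := by ring
      _ ≤ (2 * |h| + 5) * x ^ 2 := by
          apply mul_le_mul hew hg_le hg0
          nlinarith [abs_nonneg h]
  have hto : Tendsto (fun τ => (2 * |h| + 5) * (r τ) ^ 2) atTop (nhds 0) := by
    have : Tendsto (fun τ => (r τ) ^ 2) atTop (nhds 0) := by
      simpa using hlim.pow 2
    simpa using this.const_mul (2 * |h| + 5)
  have hzero : Tendsto (fun τ => Real.exp (w τ) * gExt (r τ) * Real.sin (φ τ))
      atTop (nhds 0) := squeeze_zero_norm' hbound hto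
  simp only [hang] at hzero
  exact (tendsto_nhds_unique tendsto_const_nhds hzero)
end
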